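/- Fix α > 0 and let 𝔤 = 𝔤^α_{4.9} be the 4-dimensional real Lie algebra with basis e₁,...,e₄ and nonzero brackets [e₁,e₄] = 2αe₁, [e₂,e₄] = αe₂ − e₃, [e₃,e₄] = e₂ + αe₃, [e₂,e₃] = e₁. A 4×4 real matrix R equals η·Id + D for some η ∈ ℝ and some derivation D of 𝔤 if and only if R₂₁ = R₃₁ = R₄₁ = 0, R₄₂ = R₄₃ = 0, R₃₂ = −R₂₃, R₂₂ = R₃₃, R₃₄ = −αR₁₂ − R₁₃, R₂₄ = −R₁₂ + αR₁₃, and R₄₄ = R₂₂ + R₃₃ − R₁₁. In this case η = R₄₄. -/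

import Mathlib

/-!
Testing the derivation identity on the brackets `[e₁,e₄]`, `[e₂,e₄]`, `[e₃,e₄]`, `[e₂,e₃]` gives a
linear system for the entries of `D`; since `α ≠ 0` and `α² + 1 ≠ 0` it forces `D` into the
five-parameter family `derMatrix`, every member of which is a derivation. In particular every
derivation has `D₄₄ = 0`, so `η = R₄₄`, and `R - R₄₄ • 1` is read off as a member of the family.
-/

open Matrix

/-- The Lie bracket of the Lie algebra, in coordinates. -/
def br (α : ℝ) (x y : Fin 4 → ℝ) : Fin 4 → ℝ :=
  ![2 * α * (x 0 * y 3 - x 3 * y 0) + (x 1 * y 2 - x 2 * y 1), α * (x 1 * y 3 - x 3 * y 1) + (x 2 * y 3 - x 3 * y 2), -(x 1 * y 3 - x 3 * y 1) + α * (x 2 * y 3 - x 3 * y 2), (0:ℝ)]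

/-- `D` (acting via `mulVec`) is a derivation of the bracket. -/
def IsDer (α : ℝ) (D : Matrix (Fin 4) (Fin 4) ℝ) : Prop :=
  ∀ x y : Fin 4 → ℝ, D.mulVec (br α x y) = br α (D.mulVec x) y + br α x (D.mulVec y)

/-- Indices are `0`-based, so entry `(i, j)` is the paper's `Rᵢ₊₁ⱼ₊₁`; column `j` is `D eⱼ₊₁`. -/
def derMatrix (α a b c p q : ℝ) : Matrix (Fin 4) (Fin 4) ℝ :=
  !![2 * q, a, b, c; 0, q, p, -a + α * b; 0, -p, q, -α * a - b; 0, 0, 0, 0]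

theorem isDer_derMatrix (α a b c p q : ℝ) : IsDer α (derMatrix α a b c p q) := by
  intro x y
  ext i
  fin_cases i <;> simp [derMatrix, br, mulVec, dotProduct, Fin.sum_univ_four] <;> ring

theorem IsDer.eq_derMatrix {α : ℝ} (hα : α ≠ 0) {D : Matrix (Fin 4) (Fin 4) ℝ}
    (hD : IsDer α D) : D = derMatrix α (D 0 1) (D 0 2) (D 0 3) (D 1 2) (D 1 1) := by
  have h14 := hD ![1, 0, 0, 0] ![0, 0, 0, 1]
  have h24 := hD ![0, 1, 0, 0] ![0, 0, 0, 1]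
  have h34 := hD ![0, 0, 1, 0] ![0, 0, 0, 1]
  have h23 := hD ![0, 1, 0, 0] ![0, 0, 1, 0]
  simp only [br, Fin.isValue, cons_val_zero, cons_val, mul_one, mul_zero, sub_zero, cons_val_one,
    sub_self, add_zero, neg_zero, mulVec, dotProduct, Fin.sum_univ_four, zero_add, one_mul,
    zero_mul, add_cons, head_cons, tail_cons, empty_add_empty, funext_iff, Fin.forall_fin_succ,
    cons_val_succ, Fin.succ_zero_eq_one, Fin.succ_one_eq_two, cons_val_fin_one, mul_eq_zero,
    OfNat.ofNat_ne_zero, false_or, Fin.reduceSucc, IsEmpty.forall_iff, and_true, mul_neg,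
    zero_sub] at h14 h24 h34 h23
  obtain ⟨h14₀, h14₁, h14₂, h30⟩ := h14
  obtain ⟨h24₀, h24₁, h24₂, h24₃⟩ := h24
  obtain ⟨h34₀, h34₁, h34₂, h34₃⟩ := h34
  have h33 : D 3 3 = 0 := by
    have : 2 * α * D 3 3 = 0 := by linear_combination -h14₀
    exact (mul_eq_zero.mp this).resolve_left (by positivity)
  have hα2 : α ^ 2 + 1 ≠ 0 := by positivity
  have h10 : D 1 0 = 0 := by
    have : (α ^ 2 + 1) * D 1 0 = 0 := by linear_combination α * h14₁ + h14₂
    exact (mul_eq_zero.mp this).resolve_left hα2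
  have h31 : D 3 1 = 0 := by
    have : (α ^ 2 + 1) * D 3 1 = 0 := by linear_combination α * h24₃ + h34₃
    exact (mul_eq_zero.mp this).resolve_left hα2
  have h20 : D 2 0 = 0 := by linear_combination -h14₁ + α * h10
  have h32 : D 3 2 = 0 := by linear_combination -h24₃ + α * h31
  replace h30 := h30.resolve_right hα
  ext i j
  fin_cases i <;> fin_cases j <;> simp [derMatrix] <;> linarith

theorem stmt_19 (α : ℝ) (hα : 0 < α) (R : Matrix (Fin 4) (Fin 4) ℝ) :
    ((∃ (η : ℝ) (D : Matrix (Fin 4) (Fin 4) ℝ), IsDer α D ∧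
        R = η • (1 : Matrix (Fin 4) (Fin 4) ℝ) + D) ↔
      (R 1 0 = 0 ∧ R 2 0 = 0 ∧ R 3 0 = 0 ∧ R 3 1 = 0 ∧ R 3 2 = 0 ∧ R 2 1 = -R 1 2 ∧ R 1 1 = R 2 2 ∧ R 2 3 = -(α * R 0 1) - R 0 2 ∧ R 1 3 = -R 0 1 + α * R 0 2 ∧ R 3 3 = R 1 1 + R 2 2 - R 0 0)) ∧
    (∀ (η : ℝ) (D : Matrix (Fin 4) (Fin 4) ℝ), IsDer α D →
      R = η • (1 : Matrix (Fin 4) (Fin 4) ℝ) + D → η = R 3 3) := by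
  refine ⟨⟨?_, ?_⟩, ?_⟩
  · rintro ⟨η, D, hD, rfl⟩
    rw [hD.eq_derMatrix hα.ne']
    simp [derMatrix, one_apply]
    ring
  · rintro ⟨h10, h20, h30, h31, h32, h21, h11, h23, h13, h33⟩
    refine ⟨R 3 3, derMatrix α (R 0 1) (R 0 2) (R 0 3) (R 1 2) (R 1 1 - R 3 3),
      isDer_derMatrix _ _ _ _ _ _, ?_⟩
    ext i j
    fin_cases i <;> fin_cases j <;> simp [derMatrix, one_apply] <;> linarith
  · rintro η D hD rfl
    rw [hD.eq_derMatrix hα.ne']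
    simp [derMatrix]
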